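/- arXiv:2602.03855 — 2 statements merged into one kernel-verified Lean document; each statement's English description precedes it below -/
import Mathlib

section
/- Let L ∈ ℝ^{n×s}, y ∈ ℝ^n nonzero, and x ∈ ℝ^s with Lx ≠ 0. Define the cosine similarity ξ(x) = (yᵀLx)/(‖y‖‖Lx‖). Then the operator norm of the Hessian of ξ at x satisfies ‖∇²ξ(x)‖ ≤ 5‖L‖²/‖Lx‖². -/
/-!
With `u = ‖y‖⁻¹ • y` we have `ξ z = ⟪u, L z⟫ / ‖L z‖`, and the Hessian of this function at `x`
is the bilinear form
`(v, w) ↦ -‖Lx‖⁻³ (⟪Lx, Lv⟫⟪u, Lw⟫ + ⟪u, Lv⟫⟪Lx, Lw⟫ + ⟪u, Lx⟫⟪Lv - 3 P(Lv), Lw⟫)`,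
where `P` is the orthogonal projection onto `ℝ ∙ Lx`. Cauchy–Schwarz and `‖L v‖ ≤ ‖L‖ ‖v‖` bound
the first two terms by `‖u‖ ‖L‖² ‖v‖ ‖w‖ / ‖Lx‖²` each; since `‖w - 3 P w‖² = ‖w‖² + 3 ‖P w‖²
≤ 4 ‖w‖²`, the third is at most twice that. Hence the Hessian has norm at most
`4 ‖L‖² / ‖Lx‖²`, and the gradient is the Riesz representative of the derivative, which does not
change the norm of the second derivative.
-/

open RealInnerProductSpace

variable {E F : Type*} [NormedAddCommGroup E] [InnerProductSpace ℝ E]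
  [NormedAddCommGroup F] [InnerProductSpace ℝ F]

theorem norm_fderiv_gradient [CompleteSpace E] (f : E → ℝ) (x : E) :
    ‖fderiv ℝ (gradient f) x‖ = ‖fderiv ℝ (fderiv ℝ f) x‖ := by
  let e : StrongDual ℝ E ≃ₗᵢ[ℝ] E := (InnerProductSpace.toDual ℝ E).symm
  have hgrad : gradient f = e ∘ fderiv ℝ f := rfl
  rw [hgrad, e.comp_fderiv]
  exact e.toLinearIsometry.norm_toContinuousLinearMap_comp

theorem HasFDerivAt.norm_inv {f : E → F} {f' : E →L[ℝ] F} {x : E} (hf : HasFDerivAt f f' x)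
    (hx : f x ≠ 0) :
    HasFDerivAt (fun z => ‖f z‖⁻¹) (-(‖f x‖ ^ 3)⁻¹ • (innerSL ℝ (f x)).comp f') x := by
  have hr : ‖f x‖ ≠ 0 := norm_ne_zero_iff.2 hx
  have hnorm := hf.norm_sq.sqrt (by positivity)
  simp only [Real.sqrt_sq (norm_nonneg _)] at hnorm
  refine ((hasDerivAt_inv hr).comp_hasFDerivAt x hnorm).congr_fderiv ?_
  ext v
  simp only [one_div, mul_inv_rev, neg_smul, neg_apply, smul_apply,
    ContinuousLinearMap.comp_apply, coe_innerSL_apply, nsmul_eq_mul, Nat.cast_ofNat, smul_eq_mul,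
    neg_inj]
  field_simp

theorem norm_sub_three_smul_proj_le {e : F} (he : e ≠ 0) (w : F) :
    ‖w - (3 * ⟪e, w⟫ / ‖e‖ ^ 2) • e‖ ≤ 2 * ‖w‖ := by
  have he' : ‖e‖ ≠ 0 := norm_ne_zero_iff.2 he
  have hsq : ‖w - (3 * ⟪e, w⟫ / ‖e‖ ^ 2) • e‖ ^ 2 = ‖w‖ ^ 2 + 3 * ⟪e, w⟫ ^ 2 / ‖e‖ ^ 2 := by
    rw [norm_sub_sq_real, real_inner_smul_right, norm_smul, mul_pow, Real.norm_eq_abs, sq_abs,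
      real_inner_comm]
    field_simp
    ring
  have hcs : ⟪e, w⟫ ^ 2 ≤ ‖e‖ ^ 2 * ‖w‖ ^ 2 := by
    rw [← sq_abs, ← mul_pow]
    exact pow_le_pow_left₀ (abs_nonneg _) (abs_real_inner_le_norm e w) 2
  have hproj : 3 * ⟪e, w⟫ ^ 2 / ‖e‖ ^ 2 ≤ 3 * ‖w‖ ^ 2 := by
    rw [div_le_iff₀ (by positivity)]
    nlinarith
  refine (pow_le_pow_iff_left₀ (norm_nonneg _) (by positivity) two_ne_zero).1 ?_
  rw [hsq, mul_pow]
  linarith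

section InnerDivNorm

variable (A : E →L[ℝ] F) (u : F)

theorem hasFDerivAt_inner_div_norm {x : E} (hx : A x ≠ 0) :
    HasFDerivAt (fun z => ⟪u, A z⟫ / ‖A z‖)
      (‖A x‖⁻¹ • (innerSL ℝ u).comp A
        - (⟪u, A x⟫ * ‖A x‖⁻¹ ^ 3) • (innerSL ℝ (A x)).comp A) x := by
  simp only [div_eq_mul_inv]
  refine (((innerSL ℝ u).comp A).hasFDerivAt.mul (A.hasFDerivAt.norm_inv hx)).congr_fderiv ?_
  ext v
  simp only [ContinuousLinearMap.comp_apply, coe_innerSL_apply, neg_smul, smul_neg, add_apply,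
    neg_apply, smul_apply, smul_eq_mul, inv_pow, sub_apply]
  ring

theorem fderiv_fderiv_inner_div_norm_apply {x : E} (hx : A x ≠ 0) (v w : E) :
    fderiv ℝ (fderiv ℝ fun z => ⟪u, A z⟫ / ‖A z‖) x v w =
      -(‖A x‖ ^ 3)⁻¹ * (⟪A x, A v⟫ * ⟪u, A w⟫ + ⟪u, A v⟫ * ⟪A x, A w⟫
        + ⟪u, A x⟫ * ⟪A v - (3 * ⟪A x, A v⟫ / ‖A x‖ ^ 2) • A x, A w⟫) := by
  let B : E →L[ℝ] E →L[ℝ] ℝ := (innerSL ℝ : F →L[ℝ] F →L[ℝ] ℝ).bilinearComp A A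
  let D : E → E →L[ℝ] ℝ := fun z =>
    ‖A z‖⁻¹ • (innerSL ℝ u).comp A - (⟪u, A z⟫ * ‖A z‖⁻¹ ^ 3) • B z
  have hD : fderiv ℝ (fun z => ⟪u, A z⟫ / ‖A z‖) =ᶠ[nhds x] D := by
    filter_upwards [A.continuous.continuousAt.eventually_ne hx] with z hz
    exact (hasFDerivAt_inner_div_norm A u hz).fderiv
  have hH : HasFDerivAt D _ x :=
    ((A.hasFDerivAt.norm_inv hx).smul_const ((innerSL ℝ u).comp A)).sub
      ((((innerSL ℝ u).comp A).hasFDerivAt.mul ((A.hasFDerivAt.norm_inv hx).pow 3)).smul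
        B.hasFDerivAt)
  rw [hD.fderiv_eq, hH.fderiv]
  have hr : ‖A x‖ ≠ 0 := norm_ne_zero_iff.2 hx
  simp only [neg_smul, inv_pow, Pi.mul_apply, ContinuousLinearMap.comp_apply, coe_innerSL_apply,
    Nat.add_one_sub_one, nsmul_eq_mul, Nat.cast_ofNat, smul_neg, sub_apply,
    ContinuousLinearMap.smulRight_apply, neg_apply, smul_apply, smul_eq_mul, add_apply,
    ContinuousLinearMap.bilinearComp_apply, inner_sub_left, real_inner_smul_left, neg_mul, B]
  field_simp
  ring

theorem norm_fderiv_fderiv_inner_div_norm_le {x : E} (hx : A x ≠ 0) :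
    ‖fderiv ℝ (fderiv ℝ fun z => ⟪u, A z⟫ / ‖A z‖) x‖ ≤ 4 * ‖u‖ * ‖A‖ ^ 2 / ‖A x‖ ^ 2 := by
  have hr : 0 < ‖A x‖ := norm_pos_iff.2 hx
  refine ContinuousLinearMap.opNorm_le_bound₂ _ (by positivity) fun v w => ?_
  have hv := A.le_opNorm v
  have hw := A.le_opNorm w
  have hsum : |⟪A x, A v⟫ * ⟪u, A w⟫ + ⟪u, A v⟫ * ⟪A x, A w⟫
        + ⟪u, A x⟫ * ⟪A v - (3 * ⟪A x, A v⟫ / ‖A x‖ ^ 2) • A x, A w⟫|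
      ≤ ‖A x‖ * (‖A‖ * ‖v‖) * (‖u‖ * (‖A‖ * ‖w‖)) + ‖u‖ * (‖A‖ * ‖v‖) * (‖A x‖ * (‖A‖ * ‖w‖))
        + ‖u‖ * ‖A x‖ * (2 * (‖A‖ * ‖v‖) * (‖A‖ * ‖w‖)) := by
    refine (abs_add_three _ _ _).trans ?_
    simp only [abs_mul]
    gcongr <;> refine (abs_real_inner_le_norm _ _).trans ?_ <;> gcongr
    exact (norm_sub_three_smul_proj_le hx _).trans (by gcongr)
  rw [Real.norm_eq_abs, fderiv_fderiv_inner_div_norm_apply A u hx, abs_mul, abs_neg, abs_inv,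
    abs_pow, abs_norm]
  refine (mul_le_mul_of_nonneg_left hsum (by positivity)).trans (le_of_eq ?_)
  field_simp
  ring

end InnerDivNorm

/-- The continuous linear map on Euclidean spaces induced by a matrix. -/
noncomputable def matCLM {n s : ℕ} (L : Matrix (Fin n) (Fin s) ℝ) :
    EuclideanSpace ℝ (Fin s) →L[ℝ] EuclideanSpace ℝ (Fin n) :=
  LinearMap.toContinuousLinearMap (Matrix.toEuclideanLin L)

theorem hessian_cosSim_bound_general {n s : ℕ} (L : Matrix (Fin n) (Fin s) ℝ)
    (y : EuclideanSpace ℝ (Fin n))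
    (x : EuclideanSpace ℝ (Fin s)) (hLx : matCLM L x ≠ 0)
    (ξ : EuclideanSpace ℝ (Fin s) → ℝ)
    (hξ : ∀ z, ξ z = ⟪y, matCLM L z⟫ / (‖y‖ * ‖matCLM L z‖)) :
    ‖fderiv ℝ (gradient ξ) x‖ ≤ 5 * ‖matCLM L‖ ^ 2 / ‖matCLM L x‖ ^ 2 := by
  have hξ_eq : ξ = fun z => ⟪‖y‖⁻¹ • y, matCLM L z⟫ / ‖matCLM L z‖ := by
    ext z
    rw [hξ, real_inner_smul_left]
    ring
  have hunit : ‖‖y‖⁻¹ • y‖ ≤ 1 := by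
    rw [norm_smul, norm_inv, norm_norm]
    exact inv_mul_le_one_of_le₀ le_rfl (norm_nonneg y)
  rw [norm_fderiv_gradient, hξ_eq]
  refine (norm_fderiv_fderiv_inner_div_norm_le (matCLM L) _ hLx).trans ?_
  gcongr
  linarith

/-- Hessian bound for the cosine similarity ξ(x) = yᵀLx / (‖y‖‖Lx‖). -/
theorem hessian_cosSim_bound {n s : ℕ} (L : Matrix (Fin n) (Fin s) ℝ)
    (y : EuclideanSpace ℝ (Fin n)) (hy : y ≠ 0)
    (x : EuclideanSpace ℝ (Fin s)) (hLx : matCLM L x ≠ 0)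
    (ξ : EuclideanSpace ℝ (Fin s) → ℝ)
    (hξ : ∀ z, ξ z = ⟪y, matCLM L z⟫ / (‖y‖ * ‖matCLM L z‖)) :
    ‖fderiv ℝ (gradient ξ) x‖ ≤ 5 * ‖matCLM L‖ ^ 2 / ‖matCLM L x‖ ^ 2 :=
  hessian_cosSim_bound_general L y x hLx ξ hξ
end

section
/- Let L ∈ ℝ^{n×s}, y ∈ ℝ^n nonzero, and suppose there exists δ > 0 such that ‖Lx‖ ≥ δ for all x in a set C ⊆ ℝ^s. Then the Hessian of the cosine similarity ξ(x) = (yᵀLx)/(‖y‖‖Lx‖) satisfies ‖∇²ξ(x)‖ ≤ 5‖L‖²/δ² for all x ∈ C. -/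
/-!
Write `ξ = f ∘ T` with `f w = ⟪u, w⟫ / ‖w‖` and `u = y / ‖y‖`. Then `∇ξ = T† ∘ ∇f ∘ T`, so
`∇²ξ(x) = T† ∘ ∇²f(Tx) ∘ T` and `‖∇²ξ(x)‖ ≤ ‖T‖² ‖∇²f(Tx)‖`. Bounding the four terms of the explicit
Hessian of `f` separately would give `6 ‖u‖ / ‖v‖²`; splitting off the component of `u` orthogonal
to `v`, whose norm is at most `‖u‖`, brings this down to `5 ‖u‖ / ‖v‖²`.
-/

open RealInnerProductSpace ContinuousLinearMap

section CosineSimilarity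

variable {F : Type*} [NormedAddCommGroup F] [InnerProductSpace ℝ F]

theorem hasFDerivAt_norm_inv {v : F} (hv : v ≠ 0) :
    HasFDerivAt (fun w : F => ‖w‖⁻¹) (-(‖v‖ ^ 3)⁻¹ • innerSL ℝ v) v := by
  have hnorm := (hasStrictFDerivAt_norm_sq v).hasFDerivAt.sqrt (by positivity)
  simp only [Real.sqrt_sq (norm_nonneg _)] at hnorm
  refine ((hasDerivAt_inv (norm_ne_zero_iff.2 hv)).comp_hasFDerivAt v hnorm).congr_fderiv ?_
  ext h
  simp only [one_div, mul_inv_rev, neg_smul, neg_apply, smul_apply, coe_innerSL_apply, nsmul_eq_mul,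
    Nat.cast_ofNat, smul_eq_mul, neg_inj]
  field_simp

theorem norm_sub_inner_div_smul_le (u v : F) : ‖u - (⟪v, u⟫ / ‖v‖ ^ 2) • v‖ ≤ ‖u‖ := by
  have h := (ℝ ∙ v)ᗮ.norm_starProjection_apply_le u
  rwa [Submodule.starProjection_orthogonal', sub_apply, one_apply_eq_self,
    Submodule.starProjection_singleton] at h

noncomputable def cosSimGradient (u v : F) : F := ‖v‖⁻¹ • u - (⟪u, v⟫ * ‖v‖⁻¹ ^ 3) • v

noncomputable def cosSimHessian (u v : F) : F →L[ℝ] F :=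
  -(‖v‖ ^ 3)⁻¹ • ((innerSL ℝ v).smulRight u + (innerSL ℝ u).smulRight v
    + ⟪u, v⟫ • ContinuousLinearMap.id ℝ F - (3 * ⟪u, v⟫ / ‖v‖ ^ 2) • (innerSL ℝ v).smulRight v)

theorem cosSimHessian_apply (u v h : F) : cosSimHessian u v h = -(‖v‖ ^ 3)⁻¹ •
    (⟪v, h⟫ • u + ⟪u, h⟫ • v + ⟪u, v⟫ • h - (3 * ⟪u, v⟫ * ⟪v, h⟫ / ‖v‖ ^ 2) • v) := by
  simp only [cosSimHessian, smul_apply, add_apply, sub_apply, smulRight_apply,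
    innerSL_apply_apply, id_apply]
  module

theorem hasGradientAt_inner_div_norm [CompleteSpace F] (u : F) {v : F} (hv : v ≠ 0) :
    HasGradientAt (fun w => ⟪u, w⟫ / ‖w‖) (cosSimGradient u v) v := by
  rw [hasGradientAt_iff_hasFDerivAt]
  refine ((innerSL ℝ u).hasFDerivAt.mul (hasFDerivAt_norm_inv hv)).congr_fderiv ?_
  ext h
  simp only [coe_innerSL_apply, neg_smul, smul_neg, add_apply, neg_apply, smul_apply, smul_eq_mul,
    cosSimGradient, inv_pow, map_sub, map_smul, sub_apply, InnerProductSpace.toDual_apply_apply]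
  field_simp
  ring

theorem hasFDerivAt_cosSimGradient (u : F) {v : F} (hv : v ≠ 0) :
    HasFDerivAt (cosSimGradient u) (cosSimHessian u v) v := by
  have hinv := hasFDerivAt_norm_inv hv
  refine ((hinv.smul_const u).sub
    (((innerSL ℝ u).hasFDerivAt.mul (hinv.pow 3)).smul (hasFDerivAt_id v))).congr_fderiv ?_
  ext h
  simp only [neg_smul, coe_innerSL_apply, inv_pow, Pi.mul_apply, Nat.add_one_sub_one, nsmul_eq_mul,
    Nat.cast_ofNat, smul_neg, id_eq, sub_apply, smulRight_apply, neg_apply, smul_apply, smul_eq_mul,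
    add_apply, id_apply, cosSimHessian_apply]
  module

theorem norm_cosSimHessian_numerator_le (u v h : F) :
    ‖⟪v, h⟫ • u + ⟪u, h⟫ • v + ⟪u, v⟫ • h - (3 * ⟪u, v⟫ * ⟪v, h⟫ / ‖v‖ ^ 2) • v‖
      ≤ 5 * ‖u‖ * ‖v‖ * ‖h‖ := by
  rcases eq_or_ne v 0 with rfl | hv
  · simp
  have hv2 : 0 < ‖v‖ ^ 2 := by positivity
  set c := ⟪u, v⟫
  have hc : |c| ≤ ‖u‖ * ‖v‖ := abs_real_inner_le_norm u v
  have hvh : |⟪v, h⟫| ≤ ‖v‖ * ‖h‖ := abs_real_inner_le_norm v h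
  have huh : |⟪u, h⟫| ≤ ‖u‖ * ‖h‖ := abs_real_inner_le_norm u h
  have hw : ‖u - (c / ‖v‖ ^ 2) • v‖ ≤ ‖u‖ := by
    simpa only [c, real_inner_comm] using norm_sub_inner_div_smul_le u v
  have hsplit : ⟪v, h⟫ • u + ⟪u, h⟫ • v + c • h - (3 * c * ⟪v, h⟫ / ‖v‖ ^ 2) • v
      = ⟪v, h⟫ • (u - (c / ‖v‖ ^ 2) • v) + (⟪u, h⟫ - 2 * c * ⟪v, h⟫ / ‖v‖ ^ 2) • v + c • h := by
    module
  have hcoef : |⟪u, h⟫ - 2 * c * ⟪v, h⟫ / ‖v‖ ^ 2| ≤ 3 * (‖u‖ * ‖h‖) := by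
    have : |2 * c * ⟪v, h⟫ / ‖v‖ ^ 2| ≤ 2 * (‖u‖ * ‖h‖) := by
      rw [abs_div, abs_mul, abs_mul, abs_two, abs_of_pos hv2, div_le_iff₀ hv2]
      calc 2 * |c| * |⟪v, h⟫| ≤ 2 * (‖u‖ * ‖v‖) * (‖v‖ * ‖h‖) := by gcongr
        _ = 2 * (‖u‖ * ‖h‖) * ‖v‖ ^ 2 := by ring
    linarith [abs_sub (⟪u, h⟫) (2 * c * ⟪v, h⟫ / ‖v‖ ^ 2)]
  rw [hsplit]
  calc _ ≤ |⟪v, h⟫| * ‖u - (c / ‖v‖ ^ 2) • v‖ + |⟪u, h⟫ - 2 * c * ⟪v, h⟫ / ‖v‖ ^ 2| * ‖v‖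
        + |c| * ‖h‖ := by
        refine norm_add₃_le.trans_eq ?_
        simp only [norm_smul, Real.norm_eq_abs]
    _ ≤ (‖v‖ * ‖h‖) * ‖u‖ + 3 * (‖u‖ * ‖h‖) * ‖v‖ + (‖u‖ * ‖v‖) * ‖h‖ := by gcongr
    _ = 5 * ‖u‖ * ‖v‖ * ‖h‖ := by ring

theorem norm_cosSimHessian_le (u v : F) : ‖cosSimHessian u v‖ ≤ 5 * ‖u‖ / ‖v‖ ^ 2 := by
  refine opNorm_le_bound _ (by positivity) fun h => ?_
  rcases eq_or_ne v 0 with rfl | hv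
  · simp [cosSimHessian_apply]
  rw [cosSimHessian_apply, norm_smul, norm_neg, norm_inv, norm_pow, norm_norm]
  calc (‖v‖ ^ 3)⁻¹ * _ ≤ (‖v‖ ^ 3)⁻¹ * (5 * ‖u‖ * ‖v‖ * ‖h‖) := by
        gcongr; exact norm_cosSimHessian_numerator_le u v h
    _ = 5 * ‖u‖ / ‖v‖ ^ 2 * ‖h‖ := by field_simp

end CosineSimilarity

section Composition

variable {E F : Type*} [NormedAddCommGroup E] [InnerProductSpace ℝ E] [CompleteSpace E]
  [NormedAddCommGroup F] [InnerProductSpace ℝ F] [CompleteSpace F]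

theorem HasGradientAt.comp_continuousLinearMap {f : F → ℝ} {g : F} (T : E →L[ℝ] F) {x : E}
    (hf : HasGradientAt f g (T x)) : HasGradientAt (f ∘ T) (adjoint T g) x := by
  rw [hasGradientAt_iff_hasFDerivAt] at hf ⊢
  refine (hf.comp x T.hasFDerivAt).congr_fderiv ?_
  ext h
  simp [adjoint_inner_left]

theorem norm_fderiv_gradient_inner_div_norm_comp_le (T : E →L[ℝ] F) (u : F) {x : E}
    (hx : T x ≠ 0) :
    ‖fderiv ℝ (gradient fun z => ⟪u, T z⟫ / ‖T z‖) x‖ ≤ 5 * ‖u‖ * ‖T‖ ^ 2 / ‖T x‖ ^ 2 := by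
  have hgrad : gradient (fun z => ⟪u, T z⟫ / ‖T z‖) =ᶠ[nhds x]
      fun z => adjoint T (cosSimGradient u (T z)) := by
    filter_upwards [T.continuous.continuousAt.eventually_ne hx] with z hz
    exact ((hasGradientAt_inner_div_norm u hz).comp_continuousLinearMap T).gradient
  have hhess : HasFDerivAt (fun z => adjoint T (cosSimGradient u (T z)))
      ((adjoint T).comp ((cosSimHessian u (T x)).comp T)) x :=
    (adjoint T).hasFDerivAt.comp x ((hasFDerivAt_cosSimGradient u hx).comp x T.hasFDerivAt)
  rw [(hhess.congr_of_eventuallyEq hgrad).fderiv]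
  calc _ ≤ ‖adjoint T‖ * (‖cosSimHessian u (T x)‖ * ‖T‖) :=
        (opNorm_comp_le _ _).trans (by gcongr; exact opNorm_comp_le _ _)
    _ ≤ ‖T‖ * (5 * ‖u‖ / ‖T x‖ ^ 2 * ‖T‖) := by
        rw [LinearIsometryEquiv.norm_map]
        gcongr
        exact norm_cosSimHessian_le u (T x)
    _ = 5 * ‖u‖ * ‖T‖ ^ 2 / ‖T x‖ ^ 2 := by ring

end Composition

theorem hessian_cosSim_uniform_bound_general {n s : ℕ} (L : Matrix (Fin n) (Fin s) ℝ)
    (y : EuclideanSpace ℝ (Fin n))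
    (δ : ℝ) (hδ : 0 < δ) (C : Set (EuclideanSpace ℝ (Fin s)))
    (hC : ∀ x ∈ C, δ ≤ ‖matCLM L x‖)
    (ξ : EuclideanSpace ℝ (Fin s) → ℝ)
    (hξ : ∀ z, ξ z = ⟪y, matCLM L z⟫ / (‖y‖ * ‖matCLM L z‖)) :
    ∀ x ∈ C, ‖fderiv ℝ (gradient ξ) x‖ ≤ 5 * ‖matCLM L‖ ^ 2 / δ ^ 2 := by
  intro x hx
  have hδx : δ ≤ ‖matCLM L x‖ := hC x hx
  have hu : ‖‖y‖⁻¹ • y‖ ≤ 1 := by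
    rw [norm_smul, norm_inv, norm_norm]
    exact inv_mul_le_one_of_le₀ le_rfl (norm_nonneg y)
  have hξu : ξ = fun z => ⟪‖y‖⁻¹ • y, matCLM L z⟫ / ‖matCLM L z‖ := by
    funext z
    rw [hξ, real_inner_smul_left]
    ring
  rw [hξu]
  calc _ ≤ 5 * ‖‖y‖⁻¹ • y‖ * ‖matCLM L‖ ^ 2 / ‖matCLM L x‖ ^ 2 :=
        norm_fderiv_gradient_inner_div_norm_comp_le _ _ (norm_pos_iff.1 (hδ.trans_le hδx))
    _ ≤ 5 * 1 * ‖matCLM L‖ ^ 2 / δ ^ 2 := by gcongr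
    _ = 5 * ‖matCLM L‖ ^ 2 / δ ^ 2 := by ring

/-- Uniform Hessian bound for the cosine similarity on a set where ‖Lx‖ ≥ δ. -/
theorem hessian_cosSim_uniform_bound {n s : ℕ} (L : Matrix (Fin n) (Fin s) ℝ)
    (y : EuclideanSpace ℝ (Fin n)) (hy : y ≠ 0)
    (δ : ℝ) (hδ : 0 < δ) (C : Set (EuclideanSpace ℝ (Fin s)))
    (hC : ∀ x ∈ C, δ ≤ ‖matCLM L x‖)
    (ξ : EuclideanSpace ℝ (Fin s) → ℝ)
    (hξ : ∀ z, ξ z = ⟪y, matCLM L z⟫ / (‖y‖ * ‖matCLM L z‖)) :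
    ∀ x ∈ C, ‖fderiv ℝ (gradient ξ) x‖ ≤ 5 * ‖matCLM L‖ ^ 2 / δ ^ 2 :=
  hessian_cosSim_uniform_bound_general L y δ hδ C hC ξ hξ
end
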